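/- Hölder inequality: let f : ℝ → ℂ be 2π-periodic and Lebesgue integrable on [−π, π], and let g : ℝ → ℝ be 2π-periodic with bounded variation. Then |∫_{−π}^{π} f(t) g(t) dt| ≤ |∫_{−π}^{π} f(t) dt| · inf_ℝ |g| + ‖f‖_T · V g ≤ ‖f‖_T · ‖g‖_BV. -/

import Mathlib

/-!
Fix a base point `a`. Shifting to the period `[a, a + 2π]` and writing `g = g a + (g - g a)`
splits `∫ f g` into `g a * ∫ f` and `∫ f (g - g a)`, so it suffices to bound the latter by
`‖f‖_T * V g`; letting `a` run over `ℝ` then produces `inf |g|`.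

By the Jordan decomposition, `g - g a = (p - p a) - (q - q a)` on the period, with `p`, `q`
increasing and their increments adding up to the variation of `g`. For increasing `p`, the
layer-cake formula `p t - p a = ∫ s in 0..(p b - p a), 1[s < p t - p a]` and Fubini write
`∫ t in a..b, f t * (p t - p a)` as an integral over `s` of the integrals of `f` over the superlevel
sets `{t | s < p t - p a}`. These are intervals `(c, b]` up to a null set, so each inner integral is
bounded by `‖f‖_T`.
-/

open MeasureTheory Real

/-- The Alexiewicz norm of a `2π`-periodic function. -/
noncomputable def alexNorm (f : ℝ → ℂ) : ℝ :=
  sSup {r : ℝ | ∃ α β : ℝ, α ≤ β ∧ β ≤ α + 2 * π ∧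
    r = ‖(∫ t in α..β, f t)‖}

/-- The variation of a `2π`-periodic function over a period. -/
noncomputable def periodVariation (g : ℝ → ℝ) : ENNReal :=
  ⨆ a : ℝ, eVariationOn g (Set.Icc a (a + 2 * π))

open Set Filter

lemma IsUpperSet.exists_inter_Ioc_ae_eq_Ioc {U : Set ℝ} (hU : IsUpperSet U) {a b : ℝ}
    (hab : a ≤ b) : ∃ c ∈ Icc a b, (Ioc a b ∩ U : Set ℝ) =ᵐ[volume] Ioc c b := by
  set S := Ioc a b ∩ U
  rcases S.eq_empty_or_nonempty with hS | ⟨t₀, ht₀⟩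
  · exact ⟨b, ⟨hab, le_rfl⟩, by simp [hS]⟩
  have hlow : a ∈ lowerBounds S := fun t ht => ht.1.1.le
  refine ⟨sInf S, ⟨le_csInf ⟨t₀, ht₀⟩ hlow, (csInf_le ⟨a, hlow⟩ ht₀).trans ht₀.1.2⟩, ?_⟩
  have hsub : Ioc (sInf S) b ⊆ S := fun t ht => by
    obtain ⟨u, hu, hut⟩ := exists_lt_of_csInf_lt ⟨t₀, ht₀⟩ ht.1
    exact ⟨⟨hu.1.1.trans hut, ht.2⟩, hU hut.le hu.2⟩
  have hsup : S ⊆ Icc (sInf S) b := fun t ht => ⟨csInf_le ⟨a, hlow⟩ ht, ht.1.2⟩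
  exact (hsup.eventuallyLE.trans Ioc_ae_eq_Icc.symm.le).antisymm hsub.eventuallyLE

lemma setIntegral_Ioc_indicator_Iio {E : Type*} [NormedAddCommGroup E] [NormedSpace ℝ E]
    [CompleteSpace E] (z : E) {x P : ℝ} (hx : 0 ≤ x) (hxP : x ≤ P) :
    ∫ s in Ioc 0 P, (Iio x).indicator (fun _ => z) s = x • z := by
  have hinter : Ioc 0 P ∩ Iio x = Ioo 0 x := by
    ext s
    simp only [mem_inter_iff, mem_Ioc, mem_Iio, mem_Ioo]
    grind
  rw [setIntegral_indicator measurableSet_Iio, hinter, setIntegral_const, Measure.real,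
    volume_Ioo, sub_zero, ENNReal.toReal_ofReal hx]

lemma Function.Periodic.bddAbove_range_abs {g : ℝ → ℝ} {T : ℝ} (hg : Function.Periodic g T)
    (hT : 0 < T) (hbv : BoundedVariationOn g (Icc 0 T)) : BddAbove (range fun x => |g x|) := by
  refine ⟨|g 0| + (eVariationOn g (Icc 0 T)).toReal, ?_⟩
  rintro _ ⟨x, rfl⟩
  obtain ⟨y, hy, hxy⟩ := hg.exists_mem_Ico₀ hT x
  have hdist : dist (g y) (g 0) ≤ (eVariationOn g (Icc 0 T)).toReal := by
    rw [dist_edist]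
    exact ENNReal.toReal_mono hbv (eVariationOn.edist_le g ⟨hy.1, hy.2.le⟩ ⟨le_rfl, hT.le⟩)
  rw [Real.dist_eq] at hdist
  simp only [hxy]
  linarith [abs_sub_abs_le_abs_sub (g y) (g 0)]

section

variable {f : ℝ → ℂ} {a b M : ℝ}

lemma norm_integral_mul_sub_le_of_monotone {p : ℝ → ℝ} (hp : Monotone p) (hab : a ≤ b)
    (hf : IntegrableOn f (Ioc a b)) (hM : ∀ c ∈ Icc a b, ‖∫ t in c..b, f t‖ ≤ M) :
    ‖∫ t in a..b, f t * ((p t - p a : ℝ) : ℂ)‖ ≤ M * (p b - p a) := by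
  set P := p b - p a
  have hP : 0 ≤ P := sub_nonneg.2 (hp hab)
  have hmeas : MeasurableSet {z : ℝ × ℝ | z.2 < p z.1 - p a} :=
    measurableSet_lt measurable_snd ((hp.measurable.sub_const _).comp measurable_fst)
  set G : ℝ × ℝ → ℂ := {z : ℝ × ℝ | z.2 < p z.1 - p a}.indicator (fun z => f z.1)
  have hG : Integrable G ((volume.restrict (Ioc a b)).prod (volume.restrict (Ioc 0 P))) := by
    refine (hf.norm.mul_prod (integrable_const (1 : ℝ))).mono'
      (hf.aestronglyMeasurable.comp_fst.indicator hmeas) (Eventually.of_forall fun z => ?_)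
    simpa using norm_indicator_le_norm_self (fun z : ℝ × ℝ => f z.1) z
  have hlayer : ∀ t ∈ Ioc a b, ∫ s in Ioc 0 P, G (t, s) = f t * ((p t - p a : ℝ) : ℂ) := by
    intro t ht
    change ∫ s in Ioc 0 P, (Iio (p t - p a)).indicator (fun _ => f t) s = _
    rw [setIntegral_Ioc_indicator_Iio (f t) (sub_nonneg.2 (hp ht.1.le))
      (sub_le_sub_right (hp ht.2) _), Complex.real_smul, mul_comm]
  have hsuperlevel : ∀ s ∈ Ioc 0 P, ‖∫ t in Ioc a b, G (t, s)‖ ≤ M := by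
    intro s hs
    have hU : IsUpperSet {t | s < p t - p a} := fun t u htu ht =>
      ht.trans_le (sub_le_sub_right (hp htu) _)
    obtain ⟨c, hc, hae⟩ := hU.exists_inter_Ioc_ae_eq_Ioc hab
    change ‖∫ t in Ioc a b, {t | s < p t - p a}.indicator f t‖ ≤ M
    rw [setIntegral_indicator (measurableSet_lt measurable_const (hp.measurable.sub_const _)),
      setIntegral_congr_set hae, ← intervalIntegral.integral_of_le hc.2]
    exact hM c hc
  calc ‖∫ t in a..b, f t * ((p t - p a : ℝ) : ℂ)‖
      = ‖∫ s in Ioc 0 P, ∫ t in Ioc a b, G (t, s)‖ := by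
        rw [intervalIntegral.integral_of_le hab, ← setIntegral_congr_fun measurableSet_Ioc hlayer,
          integral_integral_swap (f := fun t s => G (t, s)) hG]
    _ ≤ M * volume.real (Ioc 0 P) := norm_setIntegral_le_of_norm_le_const (by simp) hsuperlevel
    _ = M * P := by simp [hP]

lemma intervalIntegrable_mul_of_monotone {p : ℝ → ℝ} (hp : Monotone p) (hab : a ≤ b)
    (hf : IntervalIntegrable f volume a b) :
    IntervalIntegrable (fun t => f t * (p t : ℂ)) volume a b := by
  rw [intervalIntegrable_iff_integrableOn_Ioc_of_le hab] at hf ⊢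
  refine hf.mul_bdd (c := max |p a| |p b|)
    (Complex.measurable_ofReal.comp hp.measurable).aestronglyMeasurable
    ((ae_restrict_iff' measurableSet_Ioc).2 (Eventually.of_forall fun t ht => ?_))
  rw [Complex.norm_real, Real.norm_eq_abs]
  exact abs_le_max_abs_abs (hp ht.1.le) (hp ht.2)

lemma BoundedVariationOn.exists_monotone_eqOn_sub {h : ℝ → ℝ}
    (hh : BoundedVariationOn h (Icc a b)) (hab : a ≤ b) :
    ∃ p q : ℝ → ℝ, Monotone p ∧ Monotone q ∧ EqOn h (p - q) (Icc a b) ∧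
      (p b - p a) + (q b - q a) = (eVariationOn h (Icc a b)).toReal := by
  obtain ⟨p, q, hp, hq, rfl, hvar⟩ :=
    hh.locallyBoundedVariationOn.exists_monotoneOn_sub_monotoneOn'
  have ha : a ∈ Icc a b := ⟨le_rfl, hab⟩
  have hb : b ∈ Icc a b := ⟨hab, le_rfl⟩
  have extend : ∀ r : ℝ → ℝ, MonotoneOn r (Icc a b) → ∃ r', Monotone r' ∧ EqOn r r' (Icc a b) :=
    fun r hr => hr.exists_monotone_extension (hr.map_bddBelow subset_rfl ⟨a, fun _ ht => ht.1, ha⟩)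
      (hr.map_bddAbove subset_rfl ⟨b, fun _ ht => ht.2, hb⟩)
  obtain ⟨p', hp', hpp'⟩ := extend p hp
  obtain ⟨q', hq', hqq'⟩ := extend q hq
  refine ⟨p', q', hp', hq', fun t ht => by simp [hpp' ht, hqq' ht], ?_⟩
  rw [← hpp' ha, ← hpp' hb, ← hqq' ha, ← hqq' hb, hvar a ha b hb,
    variationOnFromTo.eq_of_le _ _ hab, inter_self]

lemma BoundedVariationOn.intervalIntegrable_mul {h : ℝ → ℝ}
    (hh : BoundedVariationOn h (Icc a b)) (hab : a ≤ b) (hf : IntervalIntegrable f volume a b) :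
    IntervalIntegrable (fun t => f t * (h t : ℂ)) volume a b := by
  obtain ⟨p, q, hp, hq, hpq, -⟩ := hh.exists_monotone_eqOn_sub hab
  refine ((intervalIntegrable_mul_of_monotone hp hab hf).sub
    (intervalIntegrable_mul_of_monotone hq hab hf)).congr fun t ht => ?_
  rw [uIoc_of_le hab] at ht
  simp [hpq (Ioc_subset_Icc_self ht), mul_sub]

lemma BoundedVariationOn.norm_integral_mul_sub_le {h : ℝ → ℝ}
    (hh : BoundedVariationOn h (Icc a b)) (hab : a ≤ b) (hf : IntervalIntegrable f volume a b)
    (hM : ∀ c ∈ Icc a b, ‖∫ t in c..b, f t‖ ≤ M) :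
    ‖∫ t in a..b, f t * ((h t - h a : ℝ) : ℂ)‖ ≤ M * (eVariationOn h (Icc a b)).toReal := by
  obtain ⟨p, q, hp, hq, hpq, hvar⟩ := hh.exists_monotone_eqOn_sub hab
  have hint : ∀ r : ℝ → ℝ, Monotone r →
      IntervalIntegrable (fun t => f t * ((r t - r a : ℝ) : ℂ)) volume a b :=
    fun r hr => intervalIntegrable_mul_of_monotone (hr.add_const (-r a)) hab hf
  have hf' := (intervalIntegrable_iff_integrableOn_Ioc_of_le hab).1 hf
  calc ‖∫ t in a..b, f t * ((h t - h a : ℝ) : ℂ)‖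
      = ‖(∫ t in a..b, f t * ((p t - p a : ℝ) : ℂ))
          - ∫ t in a..b, f t * ((q t - q a : ℝ) : ℂ)‖ := by
        rw [← intervalIntegral.integral_sub (hint p hp) (hint q hq)]
        refine congrArg _ (intervalIntegral.integral_congr fun t ht => ?_)
        rw [uIcc_of_le hab] at ht
        simp only [hpq ht, hpq ⟨le_rfl, hab⟩, Pi.sub_apply]
        push_cast
        ring
    _ ≤ M * (p b - p a) + M * (q b - q a) := (norm_sub_le _ _).trans (add_le_add
        (norm_integral_mul_sub_le_of_monotone hp hab hf' hM)
        (norm_integral_mul_sub_le_of_monotone hq hab hf' hM))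
    _ = M * (eVariationOn h (Icc a b)).toReal := by rw [← hvar, mul_add]

lemma norm_intervalIntegral_le_alexNorm (hfper : Function.Periodic f (2 * π))
    (hfint : ∀ c d, IntervalIntegrable f volume c d) {α β : ℝ} (hαβ : α ≤ β)
    (hβ : β ≤ α + 2 * π) : ‖∫ t in α..β, f t‖ ≤ alexNorm f := by
  refine le_csSup ⟨∫ t in (0 : ℝ)..0 + 2 * π, ‖f t‖, ?_⟩ ⟨α, β, hαβ, hβ, rfl⟩
  rintro _ ⟨c, d, hcd, hd, rfl⟩
  calc ‖∫ t in c..d, f t‖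
      ≤ ∫ t in c..d, ‖f t‖ := intervalIntegral.norm_integral_le_integral_norm hcd
    _ ≤ ∫ t in c..c + 2 * π, ‖f t‖ := intervalIntegral.integral_mono_interval le_rfl hcd hd
        (Eventually.of_forall fun t => norm_nonneg (f t)) (hfint _ _).norm
    _ = ∫ t in (0 : ℝ)..0 + 2 * π, ‖f t‖ := (hfper.comp norm).intervalIntegral_add_eq c 0

lemma norm_integral_mul_le_of_periodic {g : ℝ → ℝ} (hfper : Function.Periodic f (2 * π))
    (hfint : ∀ c d, IntervalIntegrable f volume c d) (hgper : Function.Periodic g (2 * π))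
    (hbv : BoundedVariationOn g (Icc a (a + 2 * π))) :
    ‖∫ t in (-π)..π, f t * (g t : ℂ)‖ ≤ ‖∫ t in (-π)..π, f t‖ * |g a|
      + alexNorm f * (eVariationOn g (Icc a (a + 2 * π))).toReal := by
  have hab : a ≤ a + 2 * π := by linarith [pi_pos]
  have hshift : ∀ F : ℝ → ℂ, Function.Periodic F (2 * π) →
      ∫ t in (-π)..π, F t = ∫ t in a..a + 2 * π, F t := fun F hF => by
    rw [← hF.intervalIntegral_add_eq (-π) a, neg_add_eq_sub, two_mul, add_sub_cancel_right]
  have hdiff : ∫ t in a..a + 2 * π, f t * ((g t - g a : ℝ) : ℂ)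
      = (∫ t in a..a + 2 * π, f t * (g t : ℂ)) - (g a : ℂ) * ∫ t in a..a + 2 * π, f t := by
    rw [← intervalIntegral.integral_const_mul, ← intervalIntegral.integral_sub
      (hbv.intervalIntegrable_mul hab (hfint _ _)) ((hfint _ _).const_mul _)]
    refine intervalIntegral.integral_congr fun t _ => ?_
    push_cast
    ring
  calc ‖∫ t in (-π)..π, f t * (g t : ℂ)‖
      = ‖(g a : ℂ) * (∫ t in a..a + 2 * π, f t)
          + ∫ t in a..a + 2 * π, f t * ((g t - g a : ℝ) : ℂ)‖ := by
        rw [hshift _ fun t => by simp only [hfper t, hgper t], hdiff, add_sub_cancel]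
    _ ≤ ‖∫ t in (-π)..π, f t‖ * |g a|
          + alexNorm f * (eVariationOn g (Icc a (a + 2 * π))).toReal := by
        refine (norm_add_le _ _).trans (add_le_add (le_of_eq ?_) ?_)
        · rw [norm_mul, Complex.norm_real, Real.norm_eq_abs, mul_comm, hshift f hfper]
        · exact hbv.norm_integral_mul_sub_le hab (hfint _ _) fun c hc =>
            norm_intervalIntegral_le_alexNorm hfper hfint hc.2 (by linarith [hc.1])

end

theorem holder_inequality_alexiewicz (f : ℝ → ℂ) (g : ℝ → ℝ)
    (hfper : Function.Periodic f (2 * π))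
    (hfint : IntervalIntegrable f volume (-π) π)
    (hgper : Function.Periodic g (2 * π))
    (hgbv : periodVariation g ≠ ⊤) :
    ‖(∫ t in (-π)..π, f t * (g t : ℂ))‖
      ≤ ‖(∫ t in (-π)..π, f t)‖ * (⨅ x : ℝ, |g x|)
        + alexNorm f * (periodVariation g).toReal
    ∧ ‖(∫ t in (-π)..π, f t)‖ * (⨅ x : ℝ, |g x|)
        + alexNorm f * (periodVariation g).toReal
      ≤ alexNorm f * ((⨆ x : ℝ, |g x|) + (periodVariation g).toReal) := by
  have hT : (0 : ℝ) < 2 * π := by positivity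
  have hfint' : ∀ c d, IntervalIntegrable f volume c d := hfper.intervalIntegrable hT.ne'
    (t := -π) (by rwa [neg_add_eq_sub, two_mul, add_sub_cancel_right])
  have hvar : ∀ a, eVariationOn g (Icc a (a + 2 * π)) ≤ periodVariation g :=
    le_iSup (fun a => eVariationOn g (Icc a (a + 2 * π)))
  have hbv : ∀ a, BoundedVariationOn g (Icc a (a + 2 * π)) :=
    fun a => ne_top_of_le_ne_top hgbv (hvar a)
  have hM : 0 ≤ alexNorm f := (norm_nonneg _).trans
    (norm_intervalIntegral_le_alexNorm hfper hfint' le_rfl (by linarith) (α := 0))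
  constructor
  · rw [Real.mul_iInf_of_nonneg (norm_nonneg _), ← sub_le_iff_le_add]
    refine le_ciInf fun a => ?_
    have hbound := norm_integral_mul_le_of_periodic hfper hfint' hgper (hbv a)
    have hV := mul_le_mul_of_nonneg_left (ENNReal.toReal_mono hgbv (hvar a)) hM
    linarith
  · have hI : ‖∫ t in (-π)..π, f t‖ ≤ alexNorm f :=
      norm_intervalIntegral_le_alexNorm hfper hfint' (by linarith) (by linarith)
    have hinf : ⨅ x, |g x| ≤ ⨆ x, |g x| :=
      (ciInf_le ⟨0, by rintro _ ⟨x, rfl⟩; positivity⟩ 0).trans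
        (le_ciSup (hgper.bddAbove_range_abs hT (by simpa using hbv 0)) 0)
    have hinf0 : 0 ≤ ⨅ x, |g x| := Real.iInf_nonneg fun x => abs_nonneg _
    rw [mul_add]
    gcongr
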